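/- arXiv:2211.04651 — 2 statements merged into one kernel-verified Lean document; each statement's English description precedes it below -/
import Mathlib

section
/- For any configurations a, s and any integers i ≤ j, the truncated departure process satisfies D_{i,0}(a,s)[i,j] = a[i,j] − max_{l ∈ [i,j]} max(a[l,j] − s[l,j], 0) = min( a[i,j], min_{l ∈ [i,j]} ( a[i,l−1] + s[l,j] ) ), where a[i,i−1] = 0 by the empty-sum convention. -/
open scoped BigOperators

/-- A particle configuration on `ℤ`: a `{0,1}`-valued function. -/
abbrev Config := ℤ → ℤ

/-- `x` takes only the values `0` and `1`. -/
def IsConfig (x : Config) : Prop := ∀ i, x i = 0 ∨ x i = 1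

/-- `x[i,j] = ∑_{k=i}^j x(k)` (zero if `j < i`). -/
noncomputable def cnt (x : Config) (i j : ℤ) : ℤ := ∑ k ∈ Finset.Icc i j, x k

/-- `(a,s)` has finite queue lengths. -/
def FinQ (a s : Config) : Prop :=
  ∀ i : ℤ, BddAbove {v : ℤ | ∃ j ≤ i, v = cnt a j i - cnt s j i}

/-- The queue length `Q_i(a,s) = sup_{j ≤ i} max(a[j,i] - s[j,i], 0)`. -/
noncomputable def queue (a s : Config) (i : ℤ) : ℤ :=
  sSup {q : ℤ | ∃ j ≤ i, q = max (cnt a j i - cnt s j i) 0}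

/-- The departure configuration `D(a,s)`. -/
noncomputable def dep (a s : Config) : Config := fun i =>
  if s i = 1 ∧ (0 < queue a s (i - 1) ∨ a i = 1) then 1 else 0

/-- The unused-service configuration `U(a,s)`. -/
noncomputable def unusedSrv (a s : Config) : Config := fun i =>
  if s i = 1 ∧ queue a s (i - 1) = 0 ∧ a i = 0 then 1 else 0

/-- `R(a,s)(i) = a(i) + U(a,s)(i)`. -/
noncomputable def Rmap (a s : Config) : Config := fun i => a i + unusedSrv a s i

/-- Truncation: `x_{n,0}(i) = x(i)` for `i ≥ n`, `0` otherwise. -/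
def trunc (x : Config) (n : ℤ) : Config := fun i => if n ≤ i then x i else 0

/-- Left-peeling tandem queue: `Dtandem x [s₁,…,s_k] = D(…D(D(x,s₁),s₂)…,s_k)`. -/
noncomputable def Dtandem : Config → List Config → Config
  | x, [] => x
  | x, s :: rest => Dtandem (dep x s) rest

/-- `DtandemList [x₁,…,xₙ] = Dⁿ(x₁,…,xₙ)`. -/
noncomputable def DtandemList : List Config → Config
  | [] => fun _ => 0
  | x :: rest => Dtandem x rest

/-- `DtandemN x = Dⁿ(x 0, …, x (n-1))`. -/
noncomputable def DtandemN {n : ℕ} (x : Fin n → Config) : Config :=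
  DtandemList (List.ofFn x)

/-- Every pair appearing as (arrivals, services) in the recursive definition of the
tandem departure map has finite queue lengths. -/
def TandemFinQ : List Config → Prop
  | [] => True
  | [_] => True
  | x :: s :: rest => FinQ x s ∧ TandemFinQ (dep x s :: rest)
  termination_by l => l.length


/-!
Started empty at time `i`, the queue at time `k ≥ i` is the finite maximum
`Q_k = max_{l ∈ [i,k]} max(a[l,k] − s[l,k], 0)`, which obeys Lindley's recursion
`Q_{k+1} = max(Q_k + a(k+1) − s(k+1), 0)`. A departure at time `k` is then exactly
`Q_{k−1} + a(k) − Q_k`, so the departures telescope to `D[i,j] = a[i,j] − Q_j`.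
The second formula follows by splitting `a[i,j] = a[i,l−1] + a[l,j]` inside the maximum.
-/

open Finset

section Counts

variable (x : Config)

lemma cnt_of_lt {i j : ℤ} (h : j < i) : cnt x i j = 0 := by
  simp [cnt, Icc_eq_empty_of_lt h]

lemma cnt_self (i : ℤ) : cnt x i i = x i := by
  simp [cnt]

lemma cnt_add_one {i j : ℤ} (h : i ≤ j + 1) : cnt x i (j + 1) = cnt x i j + x (j + 1) := by
  rw [cnt, cnt, ← insert_Icc_right_eq_Icc_add_one h, sum_insert (by simp), add_comm]

lemma cnt_eq_add_cnt {i l j : ℤ} (hil : i ≤ l) (hlj : l ≤ j + 1) :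
    cnt x i j = cnt x i (l - 1) + cnt x l j := by
  rw [cnt, cnt, cnt, Icc_sub_one_right_eq_Ico, ← Ico_add_one_right_eq_Icc,
    ← Ico_add_one_right_eq_Icc, ← Ico_union_Ico_eq_Ico hil hlj,
    sum_union (Ico_disjoint_Ico_consecutive i l (j + 1))]

lemma cnt_trunc (n i j : ℤ) : cnt (trunc x n) i j = cnt x (max n i) j := by
  rw [cnt, cnt, ← sum_subset (Icc_subset_Icc (le_max_right n i) le_rfl)]
  · refine sum_congr rfl fun k hk => if_pos ?_
    exact (le_max_left n i).trans (mem_Icc.mp hk).1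
  · intro k hk hk'
    simp only [mem_Icc, not_and, not_le] at hk hk'
    exact if_neg (by omega)

end Counts

noncomputable def queueFrom (a s : Config) {i k : ℤ} (h : i ≤ k) : ℤ :=
  (Icc i k).sup' (nonempty_Icc.mpr h) fun l => max (cnt a l k - cnt s l k) 0

section QueueFrom

variable {a s : Config} {i k : ℤ}

lemma le_queueFrom (h : i ≤ k) {l : ℤ} (hil : i ≤ l) (hlk : l ≤ k) :
    max (cnt a l k - cnt s l k) 0 ≤ queueFrom a s h :=
  le_sup' (fun l => max (cnt a l k - cnt s l k) 0) (mem_Icc.mpr ⟨hil, hlk⟩)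

lemma queueFrom_nonneg (h : i ≤ k) : 0 ≤ queueFrom a s h :=
  (le_max_right _ _).trans (le_queueFrom h le_rfl h)

lemma queueFrom_self : queueFrom a s (le_refl i) = max (a i - s i) 0 := by
  simp [queueFrom, cnt_self]

lemma queueFrom_add_one (h : i ≤ k) (h' : i ≤ k + 1) :
    queueFrom a s h' = max (queueFrom a s h + a (k + 1) - s (k + 1)) 0 := by
  have hQ : 0 ≤ queueFrom a s h := queueFrom_nonneg h
  apply le_antisymm
  · refine sup'_le _ _ fun l hl => ?_
    obtain ⟨hil, hlk⟩ := mem_Icc.mp hl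
    rcases hlk.lt_or_eq with hlk | rfl
    · have := le_queueFrom (a := a) (s := s) h hil (Int.lt_add_one_iff.mp hlk)
      rw [cnt_add_one a (by omega), cnt_add_one s (by omega)]
      omega
    · rw [cnt_self, cnt_self]
      omega
  · have hlast : max (a (k + 1) - s (k + 1)) 0 ≤ queueFrom a s h' := by
      simpa only [cnt_self] using le_queueFrom h' h' le_rfl
    have hshift : queueFrom a s h ≤ queueFrom a s h' - (a (k + 1) - s (k + 1)) := by
      refine sup'_le _ _ fun l hl => ?_
      obtain ⟨hil, hlk⟩ := mem_Icc.mp hl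
      have := le_queueFrom (a := a) (s := s) h' hil (by omega)
      rw [cnt_add_one a (by omega), cnt_add_one s (by omega)] at this
      omega
    have hQ' : 0 ≤ queueFrom a s h' := queueFrom_nonneg h'
    omega

end QueueFrom

section Truncation

variable (a s : Config) {i k : ℤ}

lemma queue_trunc_of_lt (h : k < i) : queue (trunc a i) (trunc s i) k = 0 := by
  have hzero : ∀ j, cnt (trunc a i) j k - cnt (trunc s i) j k = 0 := fun j => by
    rw [cnt_trunc, cnt_trunc, cnt_of_lt a (by omega), cnt_of_lt s (by omega), sub_zero]
  have hset : {q : ℤ | ∃ j ≤ k, q = max (cnt (trunc a i) j k - cnt (trunc s i) j k) 0} = {0} := by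
    ext q
    simp only [hzero, max_self, Set.mem_ofPred_eq, Set.mem_singleton_iff]
    exact ⟨fun ⟨_, _, hq⟩ => hq, fun hq => ⟨k, le_rfl, hq⟩⟩
  rw [queue, hset, csSup_singleton]

lemma queue_trunc (h : i ≤ k) : queue (trunc a i) (trunc s i) k = queueFrom a s h := by
  rw [queue, queueFrom, sup'_eq_csSup_image]
  congr 1
  ext q
  simp only [Set.mem_ofPred_eq, Set.mem_image, mem_coe, mem_Icc, cnt_trunc]
  constructor
  · rintro ⟨j, hj, rfl⟩
    exact ⟨max i j, ⟨le_max_left _ _, max_le h hj⟩, rfl⟩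
  · rintro ⟨l, ⟨hil, hlk⟩, rfl⟩
    exact ⟨l, hlk, by rw [max_eq_right hil]⟩

end Truncation

lemma dep_eq_of_queue_nonneg {a s : Config} {k : ℤ} (ha : a k = 0 ∨ a k = 1)
    (hs : s k = 0 ∨ s k = 1) (hq : 0 ≤ queue a s (k - 1)) :
    dep a s k = queue a s (k - 1) + a k - max (queue a s (k - 1) + a k - s k) 0 := by
  unfold dep
  split_ifs with hserve
  · omega
  · rw [not_and_or, not_or] at hserve
    omega

lemma queue_trunc_nonneg (a s : Config) (i k : ℤ) : 0 ≤ queue (trunc a i) (trunc s i) k := by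
  rcases lt_or_ge k i with hk | hk
  · rw [queue_trunc_of_lt a s hk]
  · rw [queue_trunc a s hk]
    exact queueFrom_nonneg hk

lemma dep_trunc_eq {a s : Config} (ha : IsConfig a) (hs : IsConfig s) {i k : ℤ} (hik : i ≤ k) :
    dep (trunc a i) (trunc s i) k
      = queue (trunc a i) (trunc s i) (k - 1) + a k
        - max (queue (trunc a i) (trunc s i) (k - 1) + a k - s k) 0 := by
  have htrunc : ∀ x : Config, trunc x i k = x k := fun x => if_pos hik
  have := dep_eq_of_queue_nonneg (htrunc a ▸ ha k) (htrunc s ▸ hs k) (queue_trunc_nonneg a s i _)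
  rwa [htrunc, htrunc] at this

lemma cnt_dep_trunc {a s : Config} (ha : IsConfig a) (hs : IsConfig s) {i j : ℤ} (hij : i ≤ j) :
    cnt (dep (trunc a i) (trunc s i)) i j = cnt a i j - queueFrom a s hij := by
  induction j, hij using Int.leInduction with
  | base =>
    rw [cnt_self, cnt_self, dep_trunc_eq ha hs le_rfl, queue_trunc_of_lt a s (by omega),
      queueFrom_self, zero_add]
  | succ k hik ih =>
    rw [cnt_add_one _ (by omega), cnt_add_one a (by omega), ih, dep_trunc_eq ha hs (by omega),
      add_sub_cancel_right, queue_trunc a s hik, queueFrom_add_one hik]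
    ring

lemma sub_sup'_max_zero {ι α : Type*} [AddCommGroup α] [LinearOrder α] [IsOrderedAddMonoid α]
    {t : Finset ι} (ht : t.Nonempty) (c : α) (f : ι → α) :
    c - t.sup' ht (fun l => max (f l) 0) = min c (t.inf' ht fun l => c - f l) := by
  apply le_antisymm
  · obtain ⟨l₀, hl₀⟩ := ht
    refine le_min (sub_le_self _ ?_) (le_inf' _ _ fun l hl => sub_le_sub_left ?_ c)
    · exact (le_max_right (f l₀) 0).trans (le_sup' (fun l => max (f l) 0) hl₀)
    · exact (le_max_left (f l) 0).trans (le_sup' (fun l => max (f l) 0) hl)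
  · refine le_sub_comm.mp (sup'_le _ _ fun l hl => max_le ?_ ?_)
    · exact le_sub_comm.mpr ((min_le_right _ _).trans (inf'_le (fun l => c - f l) hl))
    · exact sub_nonneg.mpr (min_le_left _ _)

/-- Explicit formulas for the truncated departure process:
`D_{i,0}(a,s)[i,j] = a[i,j] − max_{l ∈ [i,j]} max(a[l,j] − s[l,j], 0)
 = min(a[i,j], min_{l ∈ [i,j]} (a[i,l−1] + s[l,j]))`. -/
theorem stmt2 (a s : Config) (ha : IsConfig a) (hs : IsConfig s) (i j : ℤ) (hij : i ≤ j) :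
    cnt (dep (trunc a i) (trunc s i)) i j
        = cnt a i j - (Finset.Icc i j).sup' (Finset.nonempty_Icc.mpr hij)
            (fun l => max (cnt a l j - cnt s l j) 0)
      ∧
    cnt (dep (trunc a i) (trunc s i)) i j
        = min (cnt a i j) ((Finset.Icc i j).inf' (Finset.nonempty_Icc.mpr hij)
            (fun l => cnt a i (l - 1) + cnt s l j)) := by
  have hD : cnt (dep (trunc a i) (trunc s i)) i j = cnt a i j - queueFrom a s hij :=
    cnt_dep_trunc ha hs hij
  refine ⟨hD, ?_⟩
  rw [hD, queueFrom, sub_sup'_max_zero]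
  congr 1
  refine inf'_congr _ rfl fun l hl => ?_
  obtain ⟨hil, hlj⟩ := mem_Icc.mp hl
  rw [cnt_eq_add_cnt a hil (by omega : l ≤ j + 1)]
  ring
end

section
/- Let a and s be configurations such that (a,s) has finite queue lengths, and let i ≤ j be integers. If D(a,s)[i,j] < s[i,j], then Q_{i−1}(a,s) < max_{l ∈ [i,j]} ( s[i,l] − a[i,l] ). -/
open scoped BigOperators

/-!
Pick `l ∈ [i, j]` with `D(l) < s(l)`: a service is wasted at `l`, so the queue is empty at
`l - 1` and nothing arrives at `l`. Since the queue at time `k` is at least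
`Q_{k-1} + a(k) - D(k)`, telescoping from `i` to `l - 1` gives
`Q_{i-1} ≤ D[i, l-1] - a[i, l-1] ≤ s[i, l-1] - a[i, l-1] = s[i, l] - a[i, l] - 1`.
-/

open Finset

lemma cnt_eq_cnt_sub_one_add (x : Config) {i j : ℤ} (h : i ≤ j) :
    cnt x i j = cnt x i (j - 1) + x j := by
  rw [cnt, ← insert_Icc_sub_one_right_eq_Icc h, sum_insert (by simp), cnt, add_comm]

lemma cnt_sub (x y : Config) (i j : ℤ) : cnt (x - y) i j = cnt x i j - cnt y i j :=
  sum_sub_distrib ..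

lemma cnt_le_cnt {x y : Config} (h : ∀ k, x k ≤ y k) (i j : ℤ) : cnt x i j ≤ cnt y i j :=
  sum_le_sum fun k _ => h k

lemma add_cnt_le_of_add_le {f : ℤ → ℤ} {x : Config} (h : ∀ k, f (k - 1) + x k ≤ f k)
    (i l : ℤ) (hl : i - 1 ≤ l) : f (i - 1) + cnt x i l ≤ f l := by
  induction l, hl using Int.leInduction with
  | base => simp [cnt]
  | succ n hn ih =>
    have := h (n + 1)
    rw [add_sub_cancel_right] at this
    rw [cnt_eq_cnt_sub_one_add x (by omega), add_sub_cancel_right]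
    omega

section Queue

variable {a s : Config}

lemma bddAbove_queue_set (hfq : FinQ a s) (i : ℤ) :
    BddAbove {q : ℤ | ∃ j ≤ i, q = max (cnt a j i - cnt s j i) 0} := by
  obtain ⟨M, hM⟩ := hfq i
  exact ⟨max M 0, by rintro _ ⟨j, hj, rfl⟩; exact max_le_max (hM ⟨j, hj, rfl⟩) le_rfl⟩

/-- The start `j = i + 1` (an empty window) accounts for the `max · 0` in `queue`. -/
lemma exists_queue_eq (hfq : FinQ a s) (i : ℤ) :
    ∃ j ≤ i + 1, queue a s i = cnt a j i - cnt s j i := by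
  obtain ⟨j, hj, hq⟩ := Int.csSup_mem (s := {q : ℤ | ∃ j ≤ i, q = max (cnt a j i - cnt s j i) 0})
    ⟨_, i, le_rfl, rfl⟩ (bddAbove_queue_set hfq i)
  rcases max_cases (cnt a j i - cnt s j i) 0 with ⟨hmax, -⟩ | ⟨hmax, -⟩
  · exact ⟨j, by omega, by rw [queue, hq, hmax]⟩
  · exact ⟨i + 1, le_rfl, by rw [queue, hq, hmax]; simp [cnt]⟩

lemma cnt_sub_cnt_le_queue (hfq : FinQ a s) {i j : ℤ} (hj : j ≤ i + 1) :
    cnt a j i - cnt s j i ≤ queue a s i := by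
  rcases hj.lt_or_eq with hj | rfl
  · exact (le_max_left _ 0).trans (le_csSup (bddAbove_queue_set hfq i) ⟨j, by omega, rfl⟩)
  · exact (by simp [cnt] : cnt a (i + 1) i - cnt s (i + 1) i ≤ max (cnt a i i - cnt s i i) 0).trans
      (le_csSup (bddAbove_queue_set hfq i) ⟨i, le_rfl, rfl⟩)

lemma queue_nonneg (hfq : FinQ a s) (i : ℤ) : 0 ≤ queue a s i := by
  simpa [cnt] using cnt_sub_cnt_le_queue hfq (le_refl (i + 1))

lemma queue_sub_one_add_sub_le_queue (hfq : FinQ a s) (k : ℤ) :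
    queue a s (k - 1) + a k - s k ≤ queue a s k := by
  obtain ⟨j, hj, hq⟩ := exists_queue_eq hfq (k - 1)
  have hjk : j ≤ k := by omega
  have := cnt_sub_cnt_le_queue hfq (show j ≤ k + 1 by omega)
  rw [cnt_eq_cnt_sub_one_add a hjk, cnt_eq_cnt_sub_one_add s hjk] at this
  omega

lemma dep_le (hs : IsConfig s) (k : ℤ) : dep a s k ≤ s k := by
  unfold dep
  split_ifs with hserved
  · exact hserved.1.ge
  · exact (hs k).elim Eq.ge (fun h => h ▸ zero_le_one)

lemma queue_sub_one_nonpos_of_dep_lt (ha : IsConfig a) (hs : IsConfig s) {l : ℤ}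
    (hl : dep a s l < s l) : queue a s (l - 1) ≤ 0 ∧ a l = 0 ∧ dep a s l = 0 ∧ s l = 1 := by
  by_cases hserved : s l = 1 ∧ (0 < queue a s (l - 1) ∨ a l = 1)
  · rw [dep, if_pos hserved] at hl
    omega
  · rw [dep, if_neg hserved] at hl ⊢
    have hsl : s l = 1 := (hs l).resolve_left hl.ne'
    simp only [hsl, true_and, not_or, not_lt] at hserved
    exact ⟨hserved.1, (ha l).resolve_right hserved.2, rfl, hsl⟩

lemma queue_sub_one_add_sub_dep_le_queue (ha : IsConfig a) (hs : IsConfig s) (hfq : FinQ a s)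
    (k : ℤ) : queue a s (k - 1) + a k - dep a s k ≤ queue a s k := by
  rcases (dep_le hs k).lt_or_eq with hlt | heq
  · obtain ⟨hq, hak, hdk, -⟩ := queue_sub_one_nonpos_of_dep_lt ha hs hlt
    have := queue_nonneg hfq k
    omega
  · exact heq ▸ queue_sub_one_add_sub_le_queue hfq k

lemma queue_sub_one_add_cnt_sub_cnt_dep_le_queue (ha : IsConfig a) (hs : IsConfig s)
    (hfq : FinQ a s) {i l : ℤ} (hl : i - 1 ≤ l) :
    queue a s (i - 1) + cnt a i l - cnt (dep a s) i l ≤ queue a s l := by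
  have := add_cnt_le_of_add_le (x := a - dep a s) (fun k => by
    simpa only [Pi.sub_apply, add_sub_assoc] using
      queue_sub_one_add_sub_dep_le_queue ha hs hfq k) i l hl
  rwa [cnt_sub, ← add_sub_assoc] at this

end Queue

/-- If `D(a,s)[i,j] < s[i,j]` then
`Q_{i−1}(a,s) < max_{l ∈ [i,j]} (s[i,l] − a[i,l])`. -/
theorem stmt3 (a s : Config) (ha : IsConfig a) (hs : IsConfig s) (hfq : FinQ a s)
    (i j : ℤ) (hij : i ≤ j)
    (hlt : cnt (dep a s) i j < cnt s i j) :
    queue a s (i - 1) < (Finset.Icc i j).sup' (Finset.nonempty_Icc.mpr hij)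
      (fun l => cnt s i l - cnt a i l) := by
  obtain ⟨l, hl, hdl⟩ := exists_lt_of_sum_lt hlt
  obtain ⟨hq, hal, -, hsl⟩ := queue_sub_one_nonpos_of_dep_lt ha hs hdl
  have hil : i ≤ l := (mem_Icc.mp hl).1
  have htel := queue_sub_one_add_cnt_sub_cnt_dep_le_queue ha hs hfq (show i - 1 ≤ l - 1 by omega)
  have hdep := cnt_le_cnt (dep_le (a := a) hs) i (l - 1)
  have hwindow : queue a s (i - 1) < cnt s i l - cnt a i l := by
    rw [cnt_eq_cnt_sub_one_add s hil, cnt_eq_cnt_sub_one_add a hil]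
    omega
  exact hwindow.trans_le (le_sup' (fun l => cnt s i l - cnt a i l) hl)
end
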